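/- Let τ ≥ 2 and let n be an integer with n > 1 + τ/2. Let f : [0,1] → ℝ be continuous and differentiable with derivative f′ of finite total variation, and suppose f lies in the cone C_τ, i.e., Var(f′) ≤ τ·∫₀¹ |f′(x) − (f(1) − f(0))| dx. With nodes x_i = (i−1)/(n−1), i = 1,…,n, T_n(f) the composite trapezoidal rule, and F̃_n(f) = Σ_{i=1}^{n−1} |f(x_{i+1}) − f(x_i) − (f(1)−f(0))/(n−1)|, one has the data-driven error bound |∫₀¹ f(x) dx − T_n(f)| ≤ τ·F̃_n(f) / (4(n−1)(2n−2−τ)). In particular, if τ·F̃_n(f)/(4(n−1)(2n−2−τ)) ≤ ε then the adaptive trapezoidal algorithm's stopping criterion guarantees |∫₀¹ f − T_n(f)| ≤ ε. -/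

import Mathlib

open MeasureTheory Set

/-!
On a panel `[a, b]` of width `h` with midpoint `m`, integration by parts writes the trapezoidal
error as `∫ (x - m) f' x`. The kernel has mean zero, so `f'` may be replaced by `f'` minus the
centre of its range, and the error is at most `Var(f') h² / 8`. On the same panel, a function `g`
with range of length `V` satisfies `∫ |g| ≤ |∫ g| + h V / 2`; for `g = f' - (f 1 - f 0)` the
integral `∫ g` is one of the data increments in `F̃_n(f)`. Summing over the panels,
`‖f' - f 1 + f 0‖₁ ≤ F̃_n(f) + Var(f') h / 2`, which turns the cone condition into
`Var(f') ≤ 2 τ (n - 1) F̃_n(f) / (2n - 2 - τ)`; inserted in the first bound this is the claim.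
-/

theorem BoundedVariationOn.intervalIntegrable {f : ℝ → ℝ} {a b : ℝ}
    (hf : BoundedVariationOn f (uIcc a b)) : IntervalIntegrable f volume a b := by
  obtain ⟨p, q, hp, hq, rfl⟩ := hf.locallyBoundedVariationOn.exists_monotoneOn_sub_monotoneOn
  exact hp.intervalIntegrable.sub hq.intervalIntegrable

theorem BoundedVariationOn.exists_mapsTo_Icc {α : Type*} [LinearOrder α] {f : α → ℝ}
    {s : Set α} (hf : BoundedVariationOn f s) (hs : s.Nonempty) :
    ∃ lo, MapsTo f s (Icc lo (lo + (eVariationOn f s).toReal)) := by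
  obtain ⟨x₀, hx₀⟩ := hs
  have hbdd : BddBelow (f '' s) :=
    ⟨f x₀ - (eVariationOn f s).toReal,
      forall_mem_image.2 fun y hy => by linarith [hf.sub_le hx₀ hy]⟩
  refine ⟨sInf (f '' s), fun x hx => ⟨csInf_le hbdd (mem_image_of_mem f hx), ?_⟩⟩
  have : f x - (eVariationOn f s).toReal ≤ sInf (f '' s) :=
    le_csInf ⟨f x₀, mem_image_of_mem f hx₀⟩
      (forall_mem_image.2 fun y hy => by linarith [hf.sub_le hx hy])
  linarith

theorem integral_abs_sub_midpoint {a b : ℝ} (hab : a ≤ b) :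
    ∫ x in a..b, |x - (a + b) / 2| = (b - a) ^ 2 / 4 := by
  set m := (a + b) / 2 with hm
  have ham : a ≤ m := by linarith
  have hmb : m ≤ b := by linarith
  have hcont : Continuous fun x : ℝ => |x - m| := by fun_prop
  have hleft : ∫ x in a..m, |x - m| = ∫ x in a..m, (m - x) :=
    intervalIntegral.integral_congr fun x hx => by
      rw [uIcc_of_le ham] at hx
      exact abs_of_nonpos (by linarith [hx.2]) |>.trans (neg_sub _ _)
  have hright : ∫ x in m..b, |x - m| = ∫ x in m..b, (x - m) :=
    intervalIntegral.integral_congr fun x hx => by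
      rw [uIcc_of_le hmb] at hx
      exact abs_of_nonneg (by linarith [hx.1])
  rw [← intervalIntegral.integral_add_adjacent_intervals (b := m)
      (hcont.intervalIntegrable _ _) (hcont.intervalIntegrable _ _), hleft, hright,
    intervalIntegral.integral_sub intervalIntegrable_const intervalIntegral.intervalIntegrable_id,
    intervalIntegral.integral_sub intervalIntegral.intervalIntegrable_id intervalIntegrable_const]
  simp only [integral_id, intervalIntegral.integral_const, smul_eq_mul, hm]
  ring

section OscillationBounds

variable {g : ℝ → ℝ} {a b lo hi : ℝ}

theorem abs_integral_sub_midpoint_mul_le (hab : a ≤ b) (hg : MapsTo g (Icc a b) (Icc lo hi))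
    (hint : IntervalIntegrable g volume a b) :
    |∫ x in a..b, (x - (a + b) / 2) * g x| ≤ (hi - lo) * (b - a) ^ 2 / 8 := by
  set m := (a + b) / 2 with hm
  set c := (lo + hi) / 2 with hc
  have hkernel : IntervalIntegrable (fun x => x - m) volume a b :=
    intervalIntegral.intervalIntegrable_id.sub intervalIntegrable_const
  have hcentre : ∫ x in a..b, (x - m) * g x = ∫ x in a..b, (x - m) * (g x - c) := by
    have hzero : ∫ x in a..b, (x - m) * c = 0 := by
      rw [intervalIntegral.integral_mul_const, intervalIntegral.integral_sub
        intervalIntegral.intervalIntegrable_id intervalIntegrable_const]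
      simp only [integral_id, intervalIntegral.integral_const, smul_eq_mul, hm]
      ring
    simp only [mul_sub]
    rw [intervalIntegral.integral_sub (hint.continuousOn_mul (by fun_prop))
      (hkernel.mul_const c), hzero, sub_zero]
  calc |∫ x in a..b, (x - m) * g x|
      = ‖∫ x in a..b, (x - m) * (g x - c)‖ := by rw [hcentre, Real.norm_eq_abs]
    _ ≤ ∫ x in a..b, |x - m| * ((hi - lo) / 2) := by
      refine intervalIntegral.norm_integral_le_of_norm_le hab (ae_of_all _ fun x hx => ?_)
        (hkernel.abs.mul_const _)
      obtain ⟨hlo, hhi⟩ := hg (Ioc_subset_Icc_self hx)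
      rw [Real.norm_eq_abs, abs_mul]
      exact mul_le_mul_of_nonneg_left (abs_sub_le_iff.2 ⟨by linarith, by linarith⟩)
        (abs_nonneg _)
    _ = (hi - lo) * (b - a) ^ 2 / 8 := by
      rw [intervalIntegral.integral_mul_const, integral_abs_sub_midpoint hab]
      ring

theorem integral_abs_le_abs_integral_add (hab : a ≤ b) (hg : MapsTo g (Icc a b) (Icc lo hi))
    (hint : IntervalIntegrable g volume a b) :
    ∫ x in a..b, |g x| ≤ |∫ x in a..b, g x| + (b - a) * (hi - lo) / 2 := by
  have hg' : ∀ x ∈ uIcc a b, g x ∈ Icc lo hi := fun x hx => hg (uIcc_of_le hab ▸ hx)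
  have hwidth : 0 ≤ (b - a) * (hi - lo) / 2 := by
    obtain ⟨h₁, h₂⟩ := hg (left_mem_Icc.2 hab)
    have : 0 ≤ b - a := by linarith
    have : 0 ≤ hi - lo := by linarith
    positivity
  rcases le_or_gt 0 lo with hlo | hlo
  · rw [intervalIntegral.integral_congr fun x hx => abs_of_nonneg (hlo.trans (hg' x hx).1)]
    linarith [le_abs_self (∫ x in a..b, g x)]
  rcases le_or_gt hi 0 with hhi | hhi
  · rw [intervalIntegral.integral_congr fun x hx => abs_of_nonpos ((hg' x hx).2.trans hhi),
      intervalIntegral.integral_neg]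
    linarith [neg_le_abs (∫ x in a..b, g x)]
  have hpoint : ∀ x ∈ Icc a b, (hi - lo) * |g x| - (lo + hi) * g x ≤ -2 * lo * hi := by
    intro x hx
    obtain ⟨h₁, h₂⟩ := hg hx
    rcases le_total 0 (g x) with h | h
    · rw [abs_of_nonneg h]; nlinarith
    · rw [abs_of_nonpos h]; nlinarith
  have hmono := intervalIntegral.integral_mono_on hab
    ((hint.abs.const_mul _).sub (hint.const_mul _)) intervalIntegrable_const hpoint
  rw [intervalIntegral.integral_sub (hint.abs.const_mul _) (hint.const_mul _),
    intervalIntegral.integral_const_mul, intervalIntegral.integral_const_mul,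
    intervalIntegral.integral_const, smul_eq_mul] at hmono
  have hsum : (lo + hi) * ∫ x in a..b, g x ≤ (hi - lo) * |∫ x in a..b, g x| :=
    (le_abs_self _).trans (by rw [abs_mul]; gcongr; exact abs_le.2 ⟨by linarith, by linarith⟩)
  refine le_of_mul_le_mul_left ?_ (by linarith : 0 < hi - lo)
  nlinarith [mul_nonneg (sub_nonneg.2 hab) (sq_nonneg (lo + hi))]

end OscillationBounds

section SingleInterval

variable {f f' : ℝ → ℝ} {a b : ℝ}

theorem integral_eq_sub_of_forall_hasDerivWithinAt_Icc (hab : a ≤ b)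
    (hf : ∀ x ∈ Icc a b, HasDerivWithinAt f (f' x) (Icc a b) x)
    (hf' : IntervalIntegrable f' volume a b) :
    ∫ x in a..b, f' x = f b - f a :=
  intervalIntegral.integral_eq_sub_of_hasDerivAt_of_le hab
    (fun x hx => (hf x hx).continuousWithinAt)
    (fun x hx => (hf x (Ioo_subset_Icc_self hx)).hasDerivAt (Icc_mem_nhds hx.1 hx.2)) hf'

theorem trapezoid_sub_integral_eq (hab : a ≤ b)
    (hf : ∀ x ∈ Icc a b, HasDerivWithinAt f (f' x) (Icc a b) x)
    (hf' : IntervalIntegrable f' volume a b) :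
    (b - a) * (f a + f b) / 2 - ∫ x in a..b, f x = ∫ x in a..b, (x - (a + b) / 2) * f' x := by
  rw [← uIcc_of_le hab] at hf
  rw [intervalIntegral.integral_mul_deriv_eq_deriv_mul_of_hasDerivWithinAt
    (fun x _ => ((hasDerivAt_id' x).sub_const ((a + b) / 2)).hasDerivWithinAt) hf
    intervalIntegrable_const hf']
  simp only [one_mul]
  ring

theorem abs_trapezoid_sub_integral_le (hab : a ≤ b)
    (hf : ∀ x ∈ Icc a b, HasDerivWithinAt f (f' x) (Icc a b) x)
    (hf' : BoundedVariationOn f' (Icc a b)) :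
    |(b - a) * (f a + f b) / 2 - ∫ x in a..b, f x|
      ≤ (eVariationOn f' (Icc a b)).toReal * (b - a) ^ 2 / 8 := by
  obtain ⟨lo, hlo⟩ := hf'.exists_mapsTo_Icc (nonempty_Icc.2 hab)
  have hint := BoundedVariationOn.intervalIntegrable (uIcc_of_le hab ▸ hf')
  rw [trapezoid_sub_integral_eq hab hf hint]
  simpa only [add_sub_cancel_left] using abs_integral_sub_midpoint_mul_le hab hlo hint

theorem integral_abs_sub_const_le (c : ℝ) (hab : a ≤ b)
    (hf : ∀ x ∈ Icc a b, HasDerivWithinAt f (f' x) (Icc a b) x)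
    (hf' : BoundedVariationOn f' (Icc a b)) :
    ∫ x in a..b, |f' x - c|
      ≤ |f b - f a - c * (b - a)| + (b - a) * (eVariationOn f' (Icc a b)).toReal / 2 := by
  obtain ⟨lo, hlo⟩ := hf'.exists_mapsTo_Icc (nonempty_Icc.2 hab)
  have hint := BoundedVariationOn.intervalIntegrable (uIcc_of_le hab ▸ hf')
  have hshift : MapsTo (fun x => f' x - c) (Icc a b)
      (Icc (lo - c) (lo - c + (eVariationOn f' (Icc a b)).toReal)) :=
    fun x hx => ⟨by linarith [(hlo hx).1], by linarith [(hlo hx).2]⟩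
  have := integral_abs_le_abs_integral_add hab hshift (hint.sub intervalIntegrable_const)
  rwa [intervalIntegral.integral_sub hint intervalIntegrable_const,
    integral_eq_sub_of_forall_hasDerivWithinAt_Icc hab hf hint, intervalIntegral.integral_const,
    smul_eq_mul, mul_comm (b - a), add_sub_cancel_left] at this

end SingleInterval

theorem BoundedVariationOn.sum_toReal_eVariationOn_Icc {α E : Type*} [LinearOrder α]
    [PseudoEMetricSpace E] {f : α → E} {x : ℕ → α} (hx : Monotone x) {N : ℕ}
    (hf : BoundedVariationOn f (Icc (x 0) (x N))) :
    ∑ i ∈ Finset.range N, (eVariationOn f (Icc (x i) (x (i + 1)))).toReal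
      = (eVariationOn f (Icc (x 0) (x N))).toReal := by
  rw [← eVariationOn.sum' f hx, ENNReal.toReal_sum]
  intro i hi
  exact hf.mono (Icc_subset_Icc (hx i.zero_le) (hx (Finset.mem_range.1 hi)))

section UniformNodes

variable {f f' : ℝ → ℝ} {x : ℕ → ℝ} {h : ℝ} {N : ℕ}

theorem abs_composite_trapezoid_sub_integral_le (hx : ∀ i, x (i + 1) - x i = h) (hh : 0 ≤ h)
    (hf : ∀ y ∈ Icc (x 0) (x N), HasDerivWithinAt f (f' y) (Icc (x 0) (x N)) y)
    (hf' : BoundedVariationOn f' (Icc (x 0) (x N))) :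
    |h * (∑ i ∈ Finset.range N, (f (x i) + f (x (i + 1)))) / 2 - ∫ y in x 0..x N, f y|
      ≤ (eVariationOn f' (Icc (x 0) (x N))).toReal * h ^ 2 / 8 := by
  have hmono : Monotone x := monotone_nat_of_le_succ fun i => by linarith [hx i]
  have hsub : ∀ i < N, Icc (x i) (x (i + 1)) ⊆ Icc (x 0) (x N) :=
    fun i hi => Icc_subset_Icc (hmono i.zero_le) (hmono hi)
  have hpiece : ∀ i < N, |h * (f (x i) + f (x (i + 1))) / 2 - ∫ y in x i..x (i + 1), f y|
      ≤ (eVariationOn f' (Icc (x i) (x (i + 1)))).toReal * h ^ 2 / 8 := fun i hi => by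
    simpa only [hx i] using abs_trapezoid_sub_integral_le (hmono i.le_succ)
      (fun y hy => (hf y (hsub i hi hy)).mono (hsub i hi)) (hf'.mono (hsub i hi))
  have hcont : ContinuousOn f (Icc (x 0) (x N)) := fun y hy => (hf y hy).continuousWithinAt
  rw [← intervalIntegral.sum_integral_adjacent_intervals fun i hi =>
      (hcont.mono (hsub i hi)).intervalIntegrable_of_Icc (hmono i.le_succ),
    Finset.mul_sum, Finset.sum_div, ← Finset.sum_sub_distrib,
    ← hf'.sum_toReal_eVariationOn_Icc hmono, Finset.sum_mul, Finset.sum_div]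
  exact (Finset.abs_sum_le_sum_abs _ _).trans
    (Finset.sum_le_sum fun i hi => hpiece i (Finset.mem_range.1 hi))

theorem integral_abs_sub_const_le_sum (c : ℝ) (hx : ∀ i, x (i + 1) - x i = h) (hh : 0 ≤ h)
    (hf : ∀ y ∈ Icc (x 0) (x N), HasDerivWithinAt f (f' y) (Icc (x 0) (x N)) y)
    (hf' : BoundedVariationOn f' (Icc (x 0) (x N))) :
    ∫ y in x 0..x N, |f' y - c|
      ≤ ∑ i ∈ Finset.range N, |f (x (i + 1)) - f (x i) - c * h|
        + h * (eVariationOn f' (Icc (x 0) (x N))).toReal / 2 := by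
  have hmono : Monotone x := monotone_nat_of_le_succ fun i => by linarith [hx i]
  have hsub : ∀ i < N, Icc (x i) (x (i + 1)) ⊆ Icc (x 0) (x N) :=
    fun i hi => Icc_subset_Icc (hmono i.zero_le) (hmono hi)
  have hpiece : ∀ i < N, ∫ y in x i..x (i + 1), |f' y - c|
      ≤ |f (x (i + 1)) - f (x i) - c * h|
        + h * (eVariationOn f' (Icc (x i) (x (i + 1)))).toReal / 2 := fun i hi => by
    simpa only [hx i] using integral_abs_sub_const_le c (hmono i.le_succ)
      (fun y hy => (hf y (hsub i hi hy)).mono (hsub i hi)) (hf'.mono (hsub i hi))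
  have hint : IntervalIntegrable (fun y => |f' y - c|) volume (x 0) (x N) :=
    ((BoundedVariationOn.intervalIntegrable (uIcc_of_le (hmono N.zero_le) ▸ hf')).sub
      intervalIntegrable_const).abs
  rw [← intervalIntegral.sum_integral_adjacent_intervals fun i hi =>
      hint.mono_set (by
        simpa only [uIcc_of_le (hmono i.le_succ), uIcc_of_le (hmono N.zero_le)] using hsub i hi),
    ← hf'.sum_toReal_eVariationOn_Icc hmono, Finset.mul_sum, Finset.sum_div,
    ← Finset.sum_add_distrib]
  exact Finset.sum_le_sum fun i hi => hpiece i (Finset.mem_range.1 hi)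

end UniformNodes

theorem adaptive_trapezoid_error_bound_general
    (τ : ℝ) (hτ : 2 ≤ τ)
    (n : ℕ) (hn : 1 + τ / 2 < (n : ℝ))
    (f f' : ℝ → ℝ)
    (hderiv : ∀ x ∈ Icc (0:ℝ) 1, HasDerivWithinAt f (f' x) (Icc 0 1) x)
    (hbv : BoundedVariationOn f' (Icc 0 1))
    (hcone : (eVariationOn f' (Icc 0 1)).toReal
      ≤ τ * ∫ x in (0:ℝ)..1, |f' x - (f 1 - f 0)|) :
    |(∫ x in (0:ℝ)..1, f x) -
        (∑ i ∈ Finset.range (n - 1),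
          (f ((i : ℝ) / ((n : ℝ) - 1)) + f (((i : ℝ) + 1) / ((n : ℝ) - 1))))
          / (2 * ((n : ℝ) - 1))|
      ≤ τ * (∑ i ∈ Finset.range (n - 1),
          |f (((i : ℝ) + 1) / ((n : ℝ) - 1)) - f ((i : ℝ) / ((n : ℝ) - 1))
            - (f 1 - f 0) / ((n : ℝ) - 1)|)
        / (4 * ((n : ℝ) - 1) * (2 * (n : ℝ) - 2 - τ)) ∧
    ∀ ε : ℝ,
      τ * (∑ i ∈ Finset.range (n - 1),
          |f (((i : ℝ) + 1) / ((n : ℝ) - 1)) - f ((i : ℝ) / ((n : ℝ) - 1))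
            - (f 1 - f 0) / ((n : ℝ) - 1)|)
        / (4 * ((n : ℝ) - 1) * (2 * (n : ℝ) - 2 - τ)) ≤ ε →
      |(∫ x in (0:ℝ)..1, f x) -
          (∑ i ∈ Finset.range (n - 1),
            (f ((i : ℝ) / ((n : ℝ) - 1)) + f (((i : ℝ) + 1) / ((n : ℝ) - 1))))
            / (2 * ((n : ℝ) - 1))|
        ≤ ε := by
  have hr : 0 < (n : ℝ) - 1 := by linarith
  have hD : 0 < 2 * (n : ℝ) - 2 - τ := by linarith
  set x : ℕ → ℝ := fun i => i / ((n : ℝ) - 1)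
  have hx : ∀ i, x (i + 1) - x i = ((n : ℝ) - 1)⁻¹ := fun i => by
    simp only [x, Nat.cast_succ]; field_simp; ring
  have hx0 : x 0 = 0 := by simp [x]
  have hxN : x (n - 1) = 1 := by
    simp only [x, Nat.cast_pred (by exact_mod_cast (by linarith : (0:ℝ) < n))]
    exact div_self hr.ne'
  have htrap := abs_composite_trapezoid_sub_integral_le (N := n - 1) hx (by positivity)
    (by rwa [hx0, hxN]) (by rwa [hx0, hxN])
  have hL1 := integral_abs_sub_const_le_sum (f 1 - f 0) (N := n - 1) hx (by positivity)
    (by rwa [hx0, hxN]) (by rwa [hx0, hxN])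
  simp only [hx0, hxN, x, Nat.cast_succ, ← div_eq_mul_inv, inv_mul_eq_div, div_div,
    abs_sub_comm _ (∫ y in (0:ℝ)..1, f y)] at htrap hL1
  set V := (eVariationOn f' (Icc 0 1)).toReal
  have hV := hcone.trans (mul_le_mul_of_nonneg_left hL1 (by linarith))
  refine (fun hbound => ⟨hbound, fun ε hε => hbound.trans hε⟩) ?_
  rw [le_div_iff₀ (by positivity), mul_comm 2]
  calc _ ≤ V * ((n : ℝ) - 1)⁻¹ ^ 2 / 8 * (4 * ((n : ℝ) - 1) * (2 * (n : ℝ) - 2 - τ)) := by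
        gcongr
    _ = V - τ * (V / (((n : ℝ) - 1) * 2)) := by field_simp; ring
    _ ≤ _ := by linarith

/-- Data-driven error bound for the adaptive trapezoidal rule on the cone
`C_τ = {f : Var(f′) ≤ τ ‖f′ − f(1) + f(0)‖₁}`:
`|∫₀¹ f − T_n(f)| ≤ τ F̃_n(f) / (4(n−1)(2n−2−τ))` for `n > 1 + τ/2`, and hence the
stopping criterion `τ F̃_n(f)/(4(n−1)(2n−2−τ)) ≤ ε` guarantees an `ε`-accurate answer. -/
theorem adaptive_trapezoid_error_bound
    (τ : ℝ) (hτ : 2 ≤ τ)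
    (n : ℕ) (hn : 1 + τ / 2 < (n : ℝ))
    (f f' : ℝ → ℝ)
    (hf : ContinuousOn f (Icc 0 1))
    (hderiv : ∀ x ∈ Icc (0:ℝ) 1, HasDerivWithinAt f (f' x) (Icc 0 1) x)
    (hbv : BoundedVariationOn f' (Icc 0 1))
    (hint : IntervalIntegrable f' volume 0 1)
    (hcone : (eVariationOn f' (Icc 0 1)).toReal
      ≤ τ * ∫ x in (0:ℝ)..1, |f' x - (f 1 - f 0)|) :
    |(∫ x in (0:ℝ)..1, f x) -
        (∑ i ∈ Finset.range (n - 1),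
          (f ((i : ℝ) / ((n : ℝ) - 1)) + f (((i : ℝ) + 1) / ((n : ℝ) - 1))))
          / (2 * ((n : ℝ) - 1))|
      ≤ τ * (∑ i ∈ Finset.range (n - 1),
          |f (((i : ℝ) + 1) / ((n : ℝ) - 1)) - f ((i : ℝ) / ((n : ℝ) - 1))
            - (f 1 - f 0) / ((n : ℝ) - 1)|)
        / (4 * ((n : ℝ) - 1) * (2 * (n : ℝ) - 2 - τ)) ∧
    ∀ ε : ℝ,
      τ * (∑ i ∈ Finset.range (n - 1),
          |f (((i : ℝ) + 1) / ((n : ℝ) - 1)) - f ((i : ℝ) / ((n : ℝ) - 1))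
            - (f 1 - f 0) / ((n : ℝ) - 1)|)
        / (4 * ((n : ℝ) - 1) * (2 * (n : ℝ) - 2 - τ)) ≤ ε →
      |(∫ x in (0:ℝ)..1, f x) -
          (∑ i ∈ Finset.range (n - 1),
            (f ((i : ℝ) / ((n : ℝ) - 1)) + f (((i : ℝ) + 1) / ((n : ℝ) - 1))))
            / (2 * ((n : ℝ) - 1))|
        ≤ ε :=
  adaptive_trapezoid_error_bound_general τ hτ n hn f f' hderiv hbv hcone
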